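/- arXiv:2310.09014 — 5 statements merged into one kernel-verified Lean document; each statement's English description precedes it below -/
import Mathlib

section
/- For positive semidefinite matrices A and B with B positive definite, define the matrix quotient A/B := ∫₀^∞ (λ+B)⁻¹ A (λ+B)⁻¹ dλ. Then A/(A+B) ≤ A/B in the Löwner order (assuming A is also positive definite so both quotients are defined). -/
/-!
The integrand `(λ + B)⁻¹ A (λ + B)⁻¹` is antitone in `B`. With `C = K⁻¹` and `D = (K + A)⁻¹`,
the resolvent identity gives `C - D = C A D = D A C`, so in
`C A C - D A D = (C - D) A D + D A (C - D) + (C - D) A (C - D)`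
the first two terms both equal `(A D)ᴴ C (A D) ≥ 0`. Taking `K = λ + B` and integrating over
`λ > 0` preserves the Löwner order; the integrals exist because, in an eigenbasis of `B`, the
entries of the integrand are combinations of `(λ + bₖ)⁻¹ (λ + bₖ')⁻¹` with `bₖ > 0`.
-/

open MeasureTheory Matrix Set ComplexOrder

variable {m : Type*} [Fintype m] [DecidableEq m]

/-- The integral matrix quotient `A/B := ∫₀^∞ (λ+B)⁻¹ A (λ+B)⁻¹ dλ`, defined entrywise. -/
noncomputable def mq (A B : Matrix m m ℂ) : Matrix m m ℂ :=
  Matrix.of fun i j =>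
    ∫ l in Set.Ioi (0:ℝ),
      ((l • (1 : Matrix m m ℂ) + B)⁻¹ * A * (l • (1 : Matrix m m ℂ) + B)⁻¹) i j

/-- Real power of a Hermitian matrix via the spectral decomposition (junk value `0` otherwise). -/
noncomputable def mrpow (A : Matrix m m ℂ) (r : ℝ) : Matrix m m ℂ :=
  if h : A.IsHermitian then
    (h.eigenvectorUnitary : Matrix m m ℂ) *
      Matrix.diagonal (fun i => ((h.eigenvalues i ^ r : ℝ) : ℂ)) *
      star (h.eigenvectorUnitary : Matrix m m ℂ)
  else 0

/-- Trace norm of a Hermitian matrix: the sum of the absolute values of its eigenvalues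
(junk value `0` otherwise). -/
noncomputable def traceNorm (A : Matrix m m ℂ) : ℝ :=
  if h : A.IsHermitian then ∑ i, |h.eigenvalues i| else 0

/-- Operator norm of a positive semidefinite (in particular Hermitian) matrix:
its largest eigenvalue (junk value `0` otherwise). -/
noncomputable def opNorm (A : Matrix m m ℂ) : ℝ :=
  if h : A.IsHermitian then ⨆ i, h.eigenvalues i else 0

/-- `Q₂^ι(A‖B) = tr[A (A/B)] = ∫₀^∞ tr[A (t+B)⁻¹ A (t+B)⁻¹] dt`. -/
noncomputable def Q2iota (A B : Matrix m m ℂ) : ℝ :=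
  ∫ t in Set.Ioi (0:ℝ),
    (A * (t • (1 : Matrix m m ℂ) + B)⁻¹ * A * (t • (1 : Matrix m m ℂ) + B)⁻¹).trace.re

/-- A projective measurement: a finite family of mutually orthogonal projections
summing to the identity. -/
structure PVM (m : Type*) [Fintype m] [DecidableEq m] where
  k : ℕ
  P : Fin k → Matrix m m ℂ
  herm : ∀ j, (P j).IsHermitian
  idem : ∀ j, P j * P j = P j
  orth : ∀ j j', j ≠ j' → P j * P j' = 0
  sum_eq : ∑ j, P j = 1

/-- The value `∑_j (tr[ρΛ_j])^α (tr[σΛ_j])^{1-α}` of a projective measurement. -/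
noncomputable def measVal (α : ℝ) (ρ σ : Matrix m m ℂ) (Λ : PVM m) : ℝ :=
  ∑ j, ((ρ * Λ.P j).trace.re) ^ α * ((σ * Λ.P j).trace.re) ^ (1 - α)

/-- The measured Rényi quantity `Q̌_α(ρ‖σ)`: for `α ∈ [1/2,1)` it is the infimum over
projective measurements of `∑_j (tr[ρΛ_j])^α (tr[σΛ_j])^{1-α}`. -/
noncomputable def Qmeas (α : ℝ) (ρ σ : Matrix m m ℂ) : ℝ :=
  sInf {v | ∃ Λ : PVM m, v = measVal α ρ σ Λ}

/-- The measured Rényi divergence `Ď_α(ρ‖σ) = (α-1)⁻¹ log Q̌_α(ρ‖σ)`. -/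
noncomputable def Dmeas (α : ℝ) (ρ σ : Matrix m m ℂ) : ℝ :=
  (1 / (α - 1)) * Real.log (Qmeas α ρ σ)

/-- The classical-quantum state `∑_x P(x) |x⟩⟨x| ⊗ ρ_x` as a matrix on `X × m`. -/
noncomputable def cqState {X : Type*} [Fintype X] [DecidableEq X]
    (P : X → ℝ) (ρ : X → Matrix m m ℂ) : Matrix (X × m) (X × m) ℂ :=
  Matrix.of fun p q => if p.1 = q.1 then (P p.1 : ℂ) * ρ p.1 p.2 q.2 else 0

theorem integrableOn_inv_add_mul_inv_add {a b : ℝ} (ha : 0 < a) (hb : 0 < b) :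
    IntegrableOn (fun l : ℝ => (l + a)⁻¹ * (l + b)⁻¹) (Ioi 0) := by
  refine ((integrable_inv_one_add_sq.const_mul (min 1 (a * b))⁻¹).integrableOn).mono'
    (by fun_prop) ((ae_restrict_iff' measurableSet_Ioi).mpr (ae_of_all _ fun l (hl : 0 < l) => ?_))
  have hquadratic : min 1 (a * b) * (1 + l ^ 2) ≤ (l + a) * (l + b) := by
    nlinarith [min_le_left 1 (a * b), min_le_right 1 (a * b), mul_pos hl (add_pos ha hb)]
  rw [Real.norm_of_nonneg (by positivity), ← mul_inv, ← mul_inv]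
  exact inv_anti₀ (by positivity) hquadratic

section

variable {n 𝕜 : Type*} [Fintype n] [RCLike 𝕜]

theorem Matrix.posSemidef_of_entrywise_integral {α : Type*} [MeasurableSpace α]
    {μ : Measure α} {F : α → Matrix n n 𝕜} (hF : ∀ i j, Integrable (fun x => F x i j) μ)
    (hpos : ∀ᵐ x ∂μ, (F x).PosSemidef) :
    (Matrix.of fun i j => ∫ x, F x i j ∂μ).PosSemidef := by
  refine posSemidef_iff_dotProduct_mulVec.mpr ⟨?_, fun v => ?_⟩
  · ext i j
    rw [conjTranspose_apply, of_apply, of_apply, RCLike.star_def, ← integral_conj]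
    exact integral_congr_ae (hpos.mono fun x hx => hx.1.apply i j)
  · have hquadratic : star v ⬝ᵥ (of (fun i j => ∫ x, F x i j ∂μ) *ᵥ v) =
        ∫ x, star v ⬝ᵥ (F x *ᵥ v) ∂μ := by
      simp only [dotProduct, mulVec, of_apply, Finset.mul_sum]
      rw [integral_finsetSum _ fun i _ => integrable_finsetSum _ fun j _ =>
        ((hF i j).mul_const _).const_mul _]
      refine Finset.sum_congr rfl fun i _ => ?_
      rw [integral_finsetSum _ fun j _ => ((hF i j).mul_const _).const_mul _]
      simp only [integral_const_mul, integral_mul_const]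
    rw [hquadratic]
    exact integral_nonneg_of_ae (hpos.mono fun x hx => hx.dotProduct_mulVec_nonneg v)

variable [DecidableEq n]

theorem Matrix.mul_diagonal_mul_diagonal_mul_apply {R : Type*} [CommSemiring R]
    (P M Q : Matrix n n R) (u v : n → R) (i j : n) :
    (P * (diagonal u * M * diagonal v) * Q) i j =
      ∑ k, ∑ k', P i k * M k k' * Q k' j * (u k * v k') := by
  simp only [mul_apply (M := P * _), mul_apply (M := P), mul_diagonal, diagonal_mul,
    Finset.sum_mul]
  rw [Finset.sum_comm]
  exact Finset.sum_congr rfl fun _ _ => Finset.sum_congr rfl fun _ _ => by ring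

theorem Matrix.IsHermitian.inv_smul_one_add_eq_cfc {B : Matrix n n 𝕜} (hB : B.IsHermitian)
    {l : ℝ} (hl : ∀ x ∈ spectrum ℝ B, l + x ≠ 0) :
    (l • (1 : Matrix n n 𝕜) + B)⁻¹ = cfc (fun x => (l + x)⁻¹) B := by
  rw [cfc_inv (fun x => l + x) B hl, cfc_const_add l (fun x => x) B, cfc_id' ℝ B,
    Algebra.algebraMap_eq_smul_one, nonsing_inv_eq_ringInverse]

theorem Matrix.PosDef.posSemidef_inv_mul_mul_inv_sub_inv_add_mul_mul_inv_add
    {K A : Matrix n n 𝕜} (hK : K.PosDef) (hA : A.PosSemidef) :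
    (K⁻¹ * A * K⁻¹ - (K + A)⁻¹ * A * (K + A)⁻¹).PosSemidef := by
  have hKA : (K + A).PosDef := hK.add_posSemidef hA
  have hunit : IsUnit K ↔ IsUnit (K + A) := iff_of_true hK.isUnit hKA.isUnit
  set C := K⁻¹
  set D := (K + A)⁻¹
  have hCAD : C - D = C * A * D := by rw [inv_sub_inv hunit, add_sub_cancel_left]
  have hDAC : C - D = D * A * C := by
    rw [← neg_sub, inv_sub_inv hunit.symm, sub_add_cancel_left, Matrix.mul_neg, Matrix.neg_mul,
      neg_neg]
  have hsandwich : (D * A * C * A * D).PosSemidef := by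
    have h : D * A * C * A * D = (A * D)ᴴ * C * (A * D) := by
      rw [conjTranspose_mul, hA.isHermitian.eq, hKA.isHermitian.inv.eq]
      noncomm_ring
    exact h ▸ hK.posSemidef.inv.conjTranspose_mul_mul_same (A * D)
  have h₁ : ((C - D) * A * D).PosSemidef := by rwa [hDAC]
  have h₂ : (D * A * (C - D)).PosSemidef := by
    rw [hCAD]
    simpa only [Matrix.mul_assoc] using hsandwich
  have h₃ : ((C - D) * A * (C - D)).PosSemidef := by
    have h := hA.conjTranspose_mul_mul_same (C - D)
    rwa [(hK.isHermitian.inv.sub hKA.isHermitian.inv).eq] at h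
  rw [show C * A * C - D * A * D = (C - D) * A * D + D * A * (C - D) + (C - D) * A * (C - D) by
    noncomm_ring]
  exact (h₁.add h₂).add h₃

noncomputable def mqIntegrand (A B : Matrix n n 𝕜) (l : ℝ) : Matrix n n 𝕜 :=
  (l • (1 : Matrix n n 𝕜) + B)⁻¹ * A * (l • (1 : Matrix n n 𝕜) + B)⁻¹

theorem Matrix.PosDef.integrableOn_mqIntegrand_apply {B : Matrix n n 𝕜} (hB : B.PosDef)
    (A : Matrix n n 𝕜) (i j : n) :
    IntegrableOn (fun l => mqIntegrand A B l i j) (Ioi 0) := by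
  set U : Matrix n n 𝕜 := ↑hB.isHermitian.eigenvectorUnitary
  set d := hB.isHermitian.eigenvalues
  have hresolvent : ∀ l ∈ Ioi (0 : ℝ), (l • (1 : Matrix n n 𝕜) + B)⁻¹ =
      U * diagonal (fun k => (((l + d k)⁻¹ : ℝ) : 𝕜)) * star U := by
    intro l (hl : 0 < l)
    rw [hB.isHermitian.inv_smul_one_add_eq_cfc, hB.isHermitian.cfc_eq, IsHermitian.cfc,
      Unitary.conjStarAlgAut_apply]
    · rfl
    intro x hx
    obtain ⟨k, rfl⟩ := hB.isHermitian.spectrum_real_eq_range_eigenvalues ▸ hx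
    exact (add_pos hl (hB.eigenvalues_pos k)).ne'
  refine IntegrableOn.congr_fun (f := fun l : ℝ => ∑ k, ∑ k', U i k * (star U * A * U) k k' *
      star U k' j * (((l + d k)⁻¹ * (l + d k')⁻¹ : ℝ) : 𝕜)) ?_ (fun l hl => ?_) measurableSet_Ioi
  · exact integrable_finsetSum _ fun k _ => integrable_finsetSum _ fun k' _ =>
      ((integrableOn_inv_add_mul_inv_add (hB.eigenvalues_pos k)
        (hB.eigenvalues_pos k')).ofReal).const_mul _
  · have hassoc : ∀ D : Matrix n n 𝕜,
        U * D * star U * A * (U * D * star U) = U * (D * (star U * A * U) * D) * star U :=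
      fun D => by simp only [Matrix.mul_assoc]
    simp only [mqIntegrand, hresolvent l hl, hassoc, mul_diagonal_mul_diagonal_mul_apply,
      RCLike.ofReal_mul]

end

theorem mq_sub_mq (A : Matrix m m ℂ) {B C : Matrix m m ℂ} (hB : B.PosDef) (hC : C.PosDef) :
    mq A B - mq A C =
      Matrix.of fun i j => ∫ l in Ioi (0 : ℝ), (mqIntegrand A B l - mqIntegrand A C l) i j := by
  ext i j
  exact (integral_sub (hB.integrableOn_mqIntegrand_apply A i j)
    (hC.integrableOn_mqIntegrand_apply A i j)).symm

/-- For positive definite `A` and `B`, `A/(A+B) ≤ A/B` in the Löwner order. -/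
theorem quotient_le (A B : Matrix m m ℂ) (hA : A.PosDef) (hB : B.PosDef) :
    (mq A B - mq A (A + B)).PosSemidef := by
  have hAB : (A + B).PosDef := hA.add hB
  rw [mq_sub_mq A hB hAB]
  refine posSemidef_of_entrywise_integral (fun i j =>
    (hB.integrableOn_mqIntegrand_apply A i j).sub (hAB.integrableOn_mqIntegrand_apply A i j)) ?_
  filter_upwards [ae_restrict_mem measurableSet_Ioi] with l (hl : 0 < l)
  have hK : (l • (1 : Matrix m m ℂ) + B).PosDef :=
    PosDef.posSemidef_add (PosSemidef.one.smul hl.le) hB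
  simpa only [mqIntegrand, add_assoc, add_comm B A] using
    hK.posSemidef_inv_mul_mul_inv_sub_inv_add_mul_mul_inv_add hA.posSemidef
end

section
/- For positive definite matrices A and B and any λ ≥ 0, the operator inequality (λ + B + A)⁻¹ A (λ + A + B)⁻¹ ≤ (λ + B)⁻¹ A (λ + B)⁻¹ holds. -/
open MeasureTheory Matrix Set ComplexOrder

variable {m : Type*} [Fintype m] [DecidableEq m]

/-- For positive definite `A, B` and `λ ≥ 0`,
`(λ + A + B)⁻¹ A (λ + A + B)⁻¹ ≤ (λ + B)⁻¹ A (λ + B)⁻¹`. -/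
theorem pointwise_quotient_le (A B : Matrix m m ℂ) (hA : A.PosDef) (hB : B.PosDef)
    (l : ℝ) (hl : 0 ≤ l) :
    ((l • (1 : Matrix m m ℂ) + B)⁻¹ * A * (l • (1 : Matrix m m ℂ) + B)⁻¹
      - (l • (1 : Matrix m m ℂ) + A + B)⁻¹ * A * (l • (1 : Matrix m m ℂ) + A + B)⁻¹).PosSemidef := by
  have hsm : (l • (1 : Matrix m m ℂ)).PosSemidef := by
    have h : l • (1 : Matrix m m ℂ) = Matrix.diagonal (fun _ => (l : ℂ)) := by
      ext i j
      by_cases h : i = j <;>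
        simp [Matrix.smul_apply, Matrix.one_apply, Matrix.diagonal_apply, h]
    rw [h, Matrix.posSemidef_diagonal_iff]
    intro i
    exact_mod_cast hl
  set C := l • (1 : Matrix m m ℂ) + B with hCdef
  set D := l • (1 : Matrix m m ℂ) + A + B with hDdef
  have hC : C.PosDef := Matrix.PosDef.posSemidef_add hsm hB
  have hD : D.PosDef :=
    Matrix.PosDef.add_posSemidef (Matrix.PosDef.posSemidef_add hsm hA) hB.posSemidef
  have hDC : D = C + A := by rw [hDdef, hCdef]; abel
  have hC1 : C * C⁻¹ = 1 := Matrix.mul_nonsing_inv _ ((Matrix.isUnit_iff_isUnit_det _).1 hC.isUnit)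
  have hC2 : C⁻¹ * C = 1 := Matrix.nonsing_inv_mul _ ((Matrix.isUnit_iff_isUnit_det _).1 hC.isUnit)
  have hD1 : D * D⁻¹ = 1 := Matrix.mul_nonsing_inv _ ((Matrix.isUnit_iff_isUnit_det _).1 hD.isUnit)
  have hD2 : D⁻¹ * D = 1 := Matrix.nonsing_inv_mul _ ((Matrix.isUnit_iff_isUnit_det _).1 hD.isUnit)
  set N : Matrix m m ℂ := A * C⁻¹ * A + A * C⁻¹ * A + A * C⁻¹ * A * C⁻¹ * A with hN
  have expand : D * (C⁻¹ * A * C⁻¹) * D = A + N := by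
    rw [hDC, hN]
    have h1 : (C + A) * (C⁻¹ * A * C⁻¹) = A * C⁻¹ + A * C⁻¹ * A * C⁻¹ := by
      rw [add_mul]
      rw [show C * (C⁻¹ * A * C⁻¹) = (C * C⁻¹) * A * C⁻¹ by noncomm_ring, hC1]
      noncomm_ring
    rw [h1, add_mul]
    rw [show A * C⁻¹ * (C + A) = A * (C⁻¹ * C) + A * C⁻¹ * A by noncomm_ring,
      show A * C⁻¹ * A * C⁻¹ * (C + A)
        = A * C⁻¹ * A * (C⁻¹ * C) + A * C⁻¹ * A * C⁻¹ * A by noncomm_ring,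
      hC2]
    noncomm_ring
  have key : C⁻¹ * A * C⁻¹ - D⁻¹ * A * D⁻¹ = D⁻¹ * N * D⁻¹ := by
    have h2 : C⁻¹ * A * C⁻¹ = D⁻¹ * (D * (C⁻¹ * A * C⁻¹) * D) * D⁻¹ := by
      rw [show D⁻¹ * (D * (C⁻¹ * A * C⁻¹) * D) * D⁻¹
          = (D⁻¹ * D) * (C⁻¹ * A * C⁻¹) * (D * D⁻¹) by noncomm_ring, hD2, hD1]
      noncomm_ring
    rw [h2, expand]
    noncomm_ring
  rw [key]
  have hNps : N.PosSemidef := by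
    have h1 : (A * C⁻¹ * A).PosSemidef := by
      have h := hC.inv.posSemidef.conjTranspose_mul_mul_same A
      rwa [hA.isHermitian.eq] at h
    have h2 : (A * C⁻¹ * A * C⁻¹ * A).PosSemidef := by
      have h := hA.posSemidef.conjTranspose_mul_mul_same (C⁻¹ * A)
      have he : (C⁻¹ * A)ᴴ = A * C⁻¹ := by
        rw [Matrix.conjTranspose_mul, hA.isHermitian.eq, hC.inv.isHermitian.eq]
      rw [he] at h
      rw [show A * C⁻¹ * A * C⁻¹ * A = A * C⁻¹ * A * (C⁻¹ * A) by noncomm_ring]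
      exact h
    exact (h1.add h1).add h2
  have hfin := hNps.conjTranspose_mul_mul_same D⁻¹
  rwa [hD.inv.isHermitian.eq] at hfin
end

section
/- For positive semidefinite operators A, B with A + B positive definite, tr[A · (B/(A+B))] ≤ (1/2)(tr[A+B] − ‖A−B‖₁), where X/Y := ∫₀^∞ (λ+Y)⁻¹ X (λ+Y)⁻¹ dλ and ‖·‖₁ is the trace norm. -/
/-!
Diagonalize `S = A + B = U diag(d) U*`. In that basis `X/S` is the Hadamard product of `X` with the
kernel `K(s, t) = ∫₀^∞ dλ / ((λ + s)(λ + t))`, so `tr[S · B/S] = tr B` and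
`tr[B · B/S] = Σ |B_pq|² K(d_q, d_p)`; hence `tr[A · B/S] = tr B - tr[B · B/S]`.
Since `K(s, t) ≥ 2 / (s + t)`, AM-GM entrywise gives `2 Re tr(BT) - tr(S T²) ≤ tr[B · B/S]`
for every Hermitian `T`. For `T = P` the projection onto the negative eigenspace of `A - B` this
yields `tr[A · B/S] ≤ tr B + tr((A - B) P)`, and `tr((A - B) P)` is the sum of the negative
eigenvalues of `A - B`, that is `(tr(A - B) - ‖A - B‖₁) / 2`.
-/

open MeasureTheory Matrix Set ComplexOrder

variable {m : Type*} [Fintype m] [DecidableEq m]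

open Filter Topology Unitary

noncomputable def quotientKernel (s t : ℝ) : ℝ :=
  ∫ l in Ioi (0 : ℝ), (l + s)⁻¹ * (l + t)⁻¹

section QuotientKernel

variable {c s t : ℝ}

lemma hasDerivAt_neg_inv_add {x : ℝ} (h : x + c ≠ 0) :
    HasDerivAt (fun l : ℝ => -(l + c)⁻¹) ((x + c) ^ 2)⁻¹ x :=
  (((hasDerivAt_id x).add_const c).inv h).neg.congr_deriv (by simp [neg_div])

lemma tendsto_neg_inv_add_atTop (c : ℝ) :
    Tendsto (fun l : ℝ => -(l + c)⁻¹) atTop (𝓝 0) := by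
  simpa using (tendsto_atTop_add_const_right _ c tendsto_id).inv_tendsto_atTop.neg

lemma integrableOn_Ioi_inv_add_sq (hc : 0 < c) :
    IntegrableOn (fun l : ℝ => ((l + c) ^ 2)⁻¹) (Ioi 0) :=
  integrableOn_Ioi_deriv_of_nonneg' (fun x hx => hasDerivAt_neg_inv_add (by grind))
    (fun _ _ => by positivity) (tendsto_neg_inv_add_atTop c)

lemma integral_Ioi_inv_add_sq (hc : 0 < c) :
    ∫ l in Ioi (0 : ℝ), ((l + c) ^ 2)⁻¹ = c⁻¹ := by
  rw [integral_Ioi_of_hasDerivAt_of_nonneg' (fun x hx => hasDerivAt_neg_inv_add (by grind))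
    (fun _ _ => by positivity) (tendsto_neg_inv_add_atTop c)]
  simp

lemma integrableOn_Ioi_inv_add_mul_inv_add (hs : 0 < s) (ht : 0 < t) :
    IntegrableOn (fun l : ℝ => (l + s)⁻¹ * (l + t)⁻¹) (Ioi 0) := by
  refine (integrableOn_Ioi_inv_add_sq (lt_min hs ht)).mono' ?_ ?_
  · have hcont : ∀ c, 0 < c → ContinuousOn (fun l : ℝ => (l + c)⁻¹) (Ioi 0) := fun c hc =>
      (continuousOn_id.add continuousOn_const).inv₀ fun l (hl : 0 < l) => (add_pos hl hc).ne'
    exact ((hcont s hs).mul (hcont t ht)).aestronglyMeasurable measurableSet_Ioi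
  · refine (ae_restrict_iff' measurableSet_Ioi).2 (ae_of_all _ fun l (hl : 0 < l) => ?_)
    rw [Real.norm_of_nonneg (by positivity), ← mul_inv]
    refine inv_anti₀ (by positivity) ?_
    have := min_le_left s t
    have := min_le_right s t
    have := lt_min hs ht
    nlinarith

lemma quotientKernel_self (hs : 0 < s) : quotientKernel s s = s⁻¹ := by
  simpa only [quotientKernel, sq, mul_inv] using integral_Ioi_inv_add_sq hs

lemma two_div_add_le_quotientKernel (hs : 0 < s) (ht : 0 < t) :
    2 / (s + t) ≤ quotientKernel s t := by
  have hmean : 0 < (s + t) / 2 := by positivity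
  rw [show 2 / (s + t) = ((s + t) / 2)⁻¹ by field_simp, ← integral_Ioi_inv_add_sq hmean]
  refine setIntegral_mono_on (integrableOn_Ioi_inv_add_sq hmean)
    (integrableOn_Ioi_inv_add_mul_inv_add hs ht) measurableSet_Ioi fun l (hl : 0 < l) =>
      (mul_inv (l + s) (l + t)).symm ▸ inv_anti₀ (by positivity) ?_
  nlinarith [sq_nonneg (s - t)]

end QuotientKernel

lemma two_mul_re_mul_le (x y : ℂ) {c : ℝ} (hc : 0 < c) :
    2 * (x * y).re ≤ ‖x‖ ^ 2 / c + c * ‖y‖ ^ 2 := by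
  have hre : (x * y).re ≤ ‖x‖ * ‖y‖ := norm_mul x y ▸ Complex.re_le_norm _
  have hamgm : 2 * (‖x‖ * ‖y‖) ≤ ‖x‖ ^ 2 / c + c * ‖y‖ ^ 2 := by
    rw [div_add' _ _ _ hc.ne', le_div_iff₀ hc]
    nlinarith [sq_nonneg (‖x‖ - c * ‖y‖)]
  linarith

lemma trace_mul_hadamard {n R : Type*} [Fintype n] [CommSemiring R] (Y M N : Matrix n n R) :
    (Y * (M ⊙ N)).trace = ∑ p, ∑ q, Y p q * M q p * N q p := by
  simp only [trace, diag_apply, mul_apply, hadamard_apply, mul_assoc]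

lemma trace_unitary_conj (U : unitaryGroup m ℂ) (X : Matrix m m ℂ) :
    (star (U : Matrix m m ℂ) * X * U).trace = X.trace := by
  rw [Matrix.mul_assoc, trace_mul_comm, Matrix.mul_assoc, Unitary.mul_star_self_of_mem U.2,
    Matrix.mul_one]

lemma trace_mul_unitary_conj (U : unitaryGroup m ℂ) (Y M : Matrix m m ℂ) :
    (Y * ((U : Matrix m m ℂ) * M * star (U : Matrix m m ℂ))).trace =
      (star (U : Matrix m m ℂ) * Y * U * M).trace := by
  rw [← Matrix.mul_assoc, trace_mul_comm]
  simp only [Matrix.mul_assoc]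

lemma integral_mul_mul_apply {n α : Type*} [Fintype n] [MeasurableSpace α] {μ : Measure α}
    (U V : Matrix n n ℂ) (M : α → Matrix n n ℂ)
    (hM : ∀ p q, Integrable (fun x => M x p q) μ) (i j : n) :
    ∫ x, (U * M x * V) i j ∂μ = (U * of (fun p q => ∫ x, M x p q ∂μ) * V) i j := by
  simp only [mul_apply, of_apply, Finset.sum_mul]
  rw [integral_finsetSum _ fun q _ => integrable_finsetSum _ fun p _ =>
    ((hM p q).const_mul _).mul_const _]
  refine Finset.sum_congr rfl fun q _ => ?_
  rw [integral_finsetSum _ fun p _ => ((hM p q).const_mul _).mul_const _]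
  simp only [integral_mul_const, integral_const_mul]

namespace Matrix.IsHermitian

lemma apply_mul_apply {n : Type*} {M : Matrix n n ℂ} (hM : M.IsHermitian) (p q : n) :
    M p q * M q p = (‖M p q‖ ^ 2 : ℝ) := by
  rw [← hM.apply q p, Complex.star_def, Complex.mul_conj, Complex.normSq_eq_norm_sq]

variable {A : Matrix m m ℂ} (hA : A.IsHermitian)

lemma star_eigenvectorUnitary_mul_mul_eigenvectorUnitary :
    star (hA.eigenvectorUnitary : Matrix m m ℂ) * A * hA.eigenvectorUnitary =
      diagonal (fun i => (hA.eigenvalues i : ℂ)) := by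
  rw [← conjStarAlgAut_star_apply (S := ℂ)]
  exact hA.conjStarAlgAut_star_eigenvectorUnitary

lemma cfc_id : hA.cfc id = A := hA.spectral_theorem.symm

lemma isHermitian_cfc (f : ℝ → ℝ) : (hA.cfc f).IsHermitian := by
  rw [← cfc_eq hA f]
  exact cfc_predicate f A

lemma cfc_mul_cfc (f g : ℝ → ℝ) : hA.cfc f * hA.cfc g = hA.cfc (f * g) := by
  simp only [IsHermitian.cfc, ← map_mul, diagonal_mul_diagonal]
  congr 2
  ext i
  simp

lemma trace_cfc (f : ℝ → ℝ) : (hA.cfc f).trace = ∑ i, (f (hA.eigenvalues i) : ℂ) := by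
  rw [IsHermitian.cfc, conjStarAlgAut_apply, trace_mul_cycle, Unitary.coe_star_mul_self,
    one_mul, trace_diagonal]
  rfl

lemma cfc_const_add (l : ℝ) : hA.cfc (fun x => l + x) = l • 1 + A := by
  conv_rhs => rw [hA.spectral_theorem]
  rw [IsHermitian.cfc, ← map_one (conjStarAlgAut ℂ _ hA.eigenvectorUnitary),
    ← Complex.coe_smul, ← map_smul, ← map_add]
  congr 1
  ext i j
  by_cases h : i = j <;> simp [h]

lemma inv_smul_one_add {l : ℝ} (hl : ∀ i, l + hA.eigenvalues i ≠ 0) :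
    (l • 1 + A)⁻¹ = hA.cfc (fun x => (l + x)⁻¹) := by
  rw [← hA.cfc_const_add]
  refine inv_eq_right_inv ?_
  rw [cfc_mul_cfc, IsHermitian.cfc, ← map_one (conjStarAlgAut ℂ _ hA.eigenvectorUnitary)]
  congr 1
  ext i j
  by_cases h : i = j <;> simp [h, one_apply, hl]

lemma cfc_mul_mul_cfc (f g : ℝ → ℝ) (X : Matrix m m ℂ) :
    hA.cfc f * X * hA.cfc g = (hA.eigenvectorUnitary : Matrix m m ℂ) *
      ((star (hA.eigenvectorUnitary : Matrix m m ℂ) * X *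
          (hA.eigenvectorUnitary : Matrix m m ℂ)) ⊙
        of fun p q => (f (hA.eigenvalues p) * g (hA.eigenvalues q) : ℂ)) *
      star (hA.eigenvectorUnitary : Matrix m m ℂ) := by
  simp only [IsHermitian.cfc, conjStarAlgAut_apply]
  set U : Matrix m m ℂ := (hA.eigenvectorUnitary : Matrix m m ℂ)
  have hmid : ∀ D D' : Matrix m m ℂ,
      U * D * star U * X * (U * D' * star U) = U * (D * (star U * X * U) * D') * star U := by
    intro D D'
    simp only [Matrix.mul_assoc]
  rw [hmid]
  congr 2
  ext p q
  simp [diagonal_mul, mul_diagonal]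
  ring

lemma exists_isHermitian_idempotent_re_trace_mul_eq {H : Matrix m m ℂ}
    (hH : H.IsHermitian) :
    ∃ P : Matrix m m ℂ, P.IsHermitian ∧ P * P = P ∧
      (H * P).trace.re = (H.trace.re - traceNorm H) / 2 := by
  set χ : ℝ → ℝ := fun x => if x < 0 then 1 else 0
  refine ⟨hH.cfc χ, hH.isHermitian_cfc χ, ?_, ?_⟩
  · rw [hH.cfc_mul_cfc]
    congr 1
    ext x
    by_cases hx : x < 0 <;> simp [χ, hx]
  · have hmul : H * hH.cfc χ = hH.cfc (id * χ) := by rw [← hH.cfc_mul_cfc, hH.cfc_id]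
    rw [hmul, hH.trace_cfc, hH.trace_eq_sum_eigenvalues, traceNorm, dif_pos hH]
    simp only [Complex.re_sum, Complex.ofReal_re, ← Finset.sum_sub_distrib, Finset.sum_div]
    refine Finset.sum_congr rfl fun i _ => ?_
    by_cases hi : hH.eigenvalues i < 0
    · simp [χ, hi, abs_of_neg hi]
    · simp [χ, hi, abs_of_nonneg (not_lt.1 hi)]

end Matrix.IsHermitian

lemma mq_eq_conj_hadamard (X : Matrix m m ℂ) {S : Matrix m m ℂ} (hS : S.PosDef) :
    mq X S = (hS.1.eigenvectorUnitary : Matrix m m ℂ) *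
      ((star (hS.1.eigenvectorUnitary : Matrix m m ℂ) * X *
          (hS.1.eigenvectorUnitary : Matrix m m ℂ)) ⊙
        of fun p q => (quotientKernel (hS.1.eigenvalues p) (hS.1.eigenvalues q) : ℂ)) *
      star (hS.1.eigenvectorUnitary : Matrix m m ℂ) := by
  set U : Matrix m m ℂ := (hS.1.eigenvectorUnitary : Matrix m m ℂ)
  set d := hS.1.eigenvalues
  have hd : ∀ i, 0 < d i := hS.eigenvalues_pos
  ext i j
  have hresolvent : ∀ l ∈ Ioi (0 : ℝ),
      ((l • (1 : Matrix m m ℂ) + S)⁻¹ * X * (l • (1 : Matrix m m ℂ) + S)⁻¹) i j =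
        (U * ((star U * X * U) ⊙
          of fun p q => (((l + d p)⁻¹ : ℝ) : ℂ) * (((l + d q)⁻¹ : ℝ) : ℂ)) *
            star U) i j := by
    intro l (hl : 0 < l)
    have hpos : ∀ p, l + d p ≠ 0 := fun p => (add_pos hl (hd p)).ne'
    rw [hS.1.inv_smul_one_add hpos, hS.1.cfc_mul_mul_cfc]
  have hint : ∀ p q, Integrable
      (fun l : ℝ => ((star U * X * U) ⊙ of fun p q => (((l + d p)⁻¹ : ℝ) : ℂ) *
        (((l + d q)⁻¹ : ℝ) : ℂ)) p q) (volume.restrict (Ioi 0)) := fun p q => by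
    simpa [hadamard_apply] using
      (integrableOn_Ioi_inv_add_mul_inv_add (hd p) (hd q)).ofReal.const_mul ((star U * X * U) p q)
  rw [mq, of_apply, setIntegral_congr_fun measurableSet_Ioi hresolvent,
    integral_mul_mul_apply _ _ _ hint]
  refine congrArg (fun M : Matrix m m ℂ => (U * M * star U) i j) (ext fun p q => ?_)
  simp only [hadamard_apply, of_apply, ← Complex.ofReal_mul, integral_const_mul, quotientKernel,
    integral_complex_ofReal]

lemma trace_mul_mq (X Y : Matrix m m ℂ) {S : Matrix m m ℂ} (hS : S.PosDef) :
    (Y * mq X S).trace =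
      ∑ p, ∑ q,
        (star (hS.1.eigenvectorUnitary : Matrix m m ℂ) * Y * hS.1.eigenvectorUnitary) p q *
        (star (hS.1.eigenvectorUnitary : Matrix m m ℂ) * X * hS.1.eigenvectorUnitary) q p *
        quotientKernel (hS.1.eigenvalues q) (hS.1.eigenvalues p) := by
  rw [mq_eq_conj_hadamard X hS, trace_mul_unitary_conj, trace_mul_hadamard]
  simp only [of_apply]

lemma trace_mul_mq_eq_trace (X : Matrix m m ℂ) {S : Matrix m m ℂ} (hS : S.PosDef) :
    (S * mq X S).trace = X.trace := by
  rw [trace_mul_mq X S hS, hS.1.star_eigenvectorUnitary_mul_mul_eigenvectorUnitary,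
    ← trace_unitary_conj hS.1.eigenvectorUnitary X, trace]
  refine Finset.sum_congr rfl fun p _ => ?_
  have hp : (hS.1.eigenvalues p : ℂ) ≠ 0 := by exact_mod_cast (hS.eigenvalues_pos p).ne'
  simp [diagonal_apply, quotientKernel_self (hS.eigenvalues_pos p)]
  field_simp

lemma re_trace_mul_mq_self {X : Matrix m m ℂ} (hX : X.IsHermitian) {S : Matrix m m ℂ}
    (hS : S.PosDef) :
    (X * mq X S).trace.re =
      ∑ p, ∑ q,
        ‖(star (hS.1.eigenvectorUnitary : Matrix m m ℂ) * X *
          hS.1.eigenvectorUnitary) p q‖ ^ 2 *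
          quotientKernel (hS.1.eigenvalues q) (hS.1.eigenvalues p) := by
  have hX' := isHermitian_conjTranspose_mul_mul (hS.1.eigenvectorUnitary : Matrix m m ℂ) hX
  rw [← star_eq_conjTranspose] at hX'
  rw [trace_mul_mq _ _ hS, Complex.re_sum]
  refine Finset.sum_congr rfl fun p _ => ?_
  rw [Complex.re_sum]
  refine Finset.sum_congr rfl fun q _ => ?_
  rw [hX'.apply_mul_apply p q, ← Complex.ofReal_mul, Complex.ofReal_re]

lemma two_mul_re_trace_mul_sub_le_sum_quotientKernel {d : m → ℝ} (hd : ∀ i, 0 < d i)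
    (X : Matrix m m ℂ) {T : Matrix m m ℂ} (hT : T.IsHermitian) :
    2 * (X * T).trace.re - (diagonal (fun i => (d i : ℂ)) * (T * T)).trace.re ≤
      ∑ p, ∑ q, ‖X p q‖ ^ 2 * quotientKernel (d q) (d p) := by
  have hnorm : ∀ p q, ‖T q p‖ = ‖T p q‖ := fun p q => by rw [← hT.apply p q, norm_star]
  have hcross : (X * T).trace.re = ∑ p, ∑ q, (X p q * T q p).re := by
    simp only [trace, diag_apply, mul_apply, Complex.re_sum]
  have hquad : (diagonal (fun i => (d i : ℂ)) * (T * T)).trace.re =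
      ∑ p, ∑ q, d p * ‖T p q‖ ^ 2 := by
    simp only [trace, diag_apply, diagonal_mul]
    simp only [mul_apply, Finset.mul_sum, Complex.re_sum, hT.apply_mul_apply,
      ← Complex.ofReal_mul, Complex.ofReal_re]
  have hswap : ∑ p, ∑ q, d p * ‖T p q‖ ^ 2 = ∑ p, ∑ q, d q * ‖T p q‖ ^ 2 := by
    rw [Finset.sum_comm]
    simp only [hnorm]
  have hsplit : 2 * (X * T).trace.re - (diagonal (fun i => (d i : ℂ)) * (T * T)).trace.re =
      ∑ p, ∑ q,
        (2 * (X p q * T q p).re - d p * ‖T p q‖ ^ 2 / 2 - d q * ‖T p q‖ ^ 2 / 2) := by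
    simp only [Finset.sum_sub_distrib, ← Finset.sum_div, ← Finset.mul_sum] at hswap hquad ⊢
    linarith
  rw [hsplit]
  refine Finset.sum_le_sum fun p _ => Finset.sum_le_sum fun q _ => ?_
  have hmean : 0 < (d p + d q) / 2 := by linarith [hd p, hd q]
  have hkernel :
      ‖X p q‖ ^ 2 / ((d p + d q) / 2) ≤ ‖X p q‖ ^ 2 * quotientKernel (d q) (d p) := by
    rw [div_eq_mul_inv, inv_div, add_comm]
    exact mul_le_mul_of_nonneg_left (two_div_add_le_quotientKernel (hd q) (hd p)) (by positivity)
  have hamgm := two_mul_re_mul_le (X p q) (T q p) hmean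
  rw [hnorm] at hamgm
  linarith

lemma two_mul_re_trace_mul_sub_le_re_trace_mul_mq {X T S : Matrix m m ℂ} (hX : X.IsHermitian)
    (hT : T.IsHermitian) (hS : S.PosDef) :
    2 * (X * T).trace.re - (S * (T * T)).trace.re ≤ (X * mq X S).trace.re := by
  set U := hS.1.eigenvectorUnitary
  have hconj : ∀ M N : Matrix m m ℂ, star (U : Matrix m m ℂ) * (M * N) * U =
      (star (U : Matrix m m ℂ) * M * U) * (star (U : Matrix m m ℂ) * N * U) := fun M N => by
    simp only [← conjStarAlgAut_star_apply (S := ℂ), map_mul]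
  have hT' := isHermitian_conjTranspose_mul_mul (U : Matrix m m ℂ) hT
  rw [← star_eq_conjTranspose] at hT'
  rw [← trace_unitary_conj U (X * T), ← trace_unitary_conj U (S * (T * T)), hconj, hconj, hconj,
    hS.1.star_eigenvectorUnitary_mul_mul_eigenvectorUnitary, re_trace_mul_mq_self hX hS]
  exact two_mul_re_trace_mul_sub_le_sum_quotientKernel hS.eigenvalues_pos _ hT'

/-- Cheng's tight one-shot error bound for the new pretty good measurement:
`tr[A · (B/(A+B))] ≤ ½(tr[A+B] − ‖A−B‖₁)`. -/
theorem error_bound (A B : Matrix m m ℂ) (hA : A.PosSemidef) (hB : B.PosSemidef)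
    (hAB : (A + B).PosDef) :
    (A * mq B (A + B)).trace.re
      ≤ (1 / 2) * ((A + B).trace.re - traceNorm (A - B)) := by
  obtain ⟨P, hP, hPP, htrace⟩ := (hA.1.sub hB.1).exists_isHermitian_idempotent_re_trace_mul_eq
  have hkey := two_mul_re_trace_mul_sub_le_re_trace_mul_mq hB.1 hP hAB
  have hsplit : (A * mq B (A + B)).trace.re = B.trace.re - (B * mq B (A + B)).trace.re := by
    rw [← Complex.sub_re, ← trace_mul_mq_eq_trace B hAB, ← trace_sub, ← sub_mul,
      add_sub_cancel_right]
  rw [hPP] at hkey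
  simp only [add_mul, sub_mul, trace_add, trace_sub, Complex.add_re, Complex.sub_re]
    at hkey htrace ⊢
  linarith
end

section
/- The functional (A, B) ↦ Q₂ⁱ(A‖B) := ∫₀^∞ tr[A (t+B)⁻¹ A (t+B)⁻¹] dt, defined on pairs of positive semidefinite matrices with supp(A) ⊆ supp(B) (taking B positive definite for simplicity), is jointly convex. -/
/-!
Diagonalise `B = U diag(d) U*` and write `Ã = U* A U`. Then
`Q₂ⁱ(A‖B) = ∑ᵢⱼ |Ãᵢⱼ|² (log dᵢ - log dⱼ) / (dᵢ - dⱼ)` (read as `dᵢ⁻¹` when `dᵢ = dⱼ`),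
and this reciprocal logarithmic mean is `∫₀¹ (τ dᵢ + (1 - τ) dⱼ)⁻¹ dτ`, so
`Q₂ⁱ(A‖B) = ∫₀¹ ⟪A, (τ L_B + (1 - τ) R_B)⁻¹ A⟫ dτ`. For each `τ` the integrand is the maximum
over `W` of `2 Re tr(A* W) - tr(W* (τ B W + (1 - τ) W B))`, attained where
`τ B W + (1 - τ) W B = A`. This is affine in `(A, B)`, and a supremum of affine functions is
jointly convex.
-/

open MeasureTheory Matrix Set ComplexOrder

variable {m : Type*} [Fintype m] [DecidableEq m]

open Filter Topology Unitary

noncomputable def invLogMean (a b : ℝ) : ℝ :=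
  if a = b then a⁻¹ else (Real.log a - Real.log b) / (a - b)

theorem convexComb_pos {a b τ : ℝ} (ha : 0 < a) (hb : 0 < b) (hτ0 : 0 ≤ τ) (hτ1 : τ ≤ 1) :
    0 < τ * a + (1 - τ) * b := by
  rcases hτ0.eq_or_lt with rfl | hτ
  · simpa using hb
  · exact add_pos_of_pos_of_nonneg (mul_pos hτ ha) (mul_nonneg (sub_nonneg.2 hτ1) hb.le)

theorem continuousOn_inv_convexComb {a b : ℝ} (ha : 0 < a) (hb : 0 < b) :
    ContinuousOn (fun τ : ℝ => (τ * a + (1 - τ) * b)⁻¹) (Icc 0 1) :=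
  ContinuousOn.inv₀ (by fun_prop) fun τ hτ => (convexComb_pos ha hb hτ.1 hτ.2).ne'

theorem integral_inv_convexComb {a b : ℝ} (ha : 0 < a) (hb : 0 < b) :
    ∫ τ in (0:ℝ)..1, (τ * a + (1 - τ) * b)⁻¹ = invLogMean a b := by
  rcases eq_or_ne a b with rfl | hab
  · simp [invLogMean, ← add_mul]
  · have hab' : a - b ≠ 0 := sub_ne_zero.mpr hab
    have h := intervalIntegral.integral_comp_add_mul (a := 0) (b := 1) (fun x : ℝ => x⁻¹) hab' b
    simp only [mul_zero, add_zero, mul_one, add_sub_cancel, integral_inv_of_pos hb ha,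
      Real.log_div ha.ne' hb.ne', smul_eq_mul] at h
    rw [invLogMean, if_neg hab, div_eq_inv_mul, ← h]
    congr 1 with τ
    ring

theorem exists_antideriv_inv_mul_add {a b : ℝ} (ha : 0 < a) (hb : 0 < b) :
    ∃ G : ℝ → ℝ, (∀ t ∈ Ici (0:ℝ), HasDerivAt G ((t + a) * (t + b))⁻¹ t) ∧
      Tendsto G atTop (𝓝 0) ∧ G 0 = -invLogMean a b := by
  rcases eq_or_ne a b with rfl | hab
  · refine ⟨fun t => -(t + a)⁻¹, fun t ht => ?_, ?_, by simp [invLogMean]⟩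
    · have hta : t + a ≠ 0 := by have : (0:ℝ) ≤ t := ht; positivity
      refine (((hasDerivAt_id' t).add_const a).inv hta).neg.congr_deriv ?_
      field_simp
    · simpa using (tendsto_atTop_add_const_right _ a tendsto_id).inv_tendsto_atTop.neg
  · refine ⟨fun t => (Real.log (t + a) - Real.log (t + b)) / (b - a), fun t ht => ?_, ?_, ?_⟩
    · have ht : (0:ℝ) ≤ t := ht
      have hba : b - a ≠ 0 := sub_ne_zero.mpr hab.symm
      have hta : t + a ≠ 0 := by positivity
      have htb : t + b ≠ 0 := by positivity
      refine ((((hasDerivAt_id' t).add_const a).log hta).sub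
        (((hasDerivAt_id' t).add_const b).log htb)).div_const (b - a) |>.congr_deriv ?_
      field_simp
      ring
    · have h := ((Real.tendsto_log_comp_add_sub_log a).sub
        (Real.tendsto_log_comp_add_sub_log b)).div_const (b - a)
      simpa using h
    · simp only [zero_add, invLogMean, if_neg hab]
      rw [← neg_div_neg_eq, neg_sub, neg_sub]
      ring

theorem integrableOn_Ioi_inv_mul_add {a b : ℝ} (ha : 0 < a) (hb : 0 < b) :
    IntegrableOn (fun t : ℝ => ((t + a) * (t + b))⁻¹) (Ioi 0) := by
  obtain ⟨G, hG, hlim, -⟩ := exists_antideriv_inv_mul_add ha hb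
  exact integrableOn_Ioi_deriv_of_nonneg' hG (fun t ht => by have : (0:ℝ) < t := ht; positivity) hlim

theorem integral_Ioi_inv_mul_add {a b : ℝ} (ha : 0 < a) (hb : 0 < b) :
    ∫ t in Ioi (0:ℝ), ((t + a) * (t + b))⁻¹ = invLogMean a b := by
  obtain ⟨G, hG, hlim, hG0⟩ := exists_antideriv_inv_mul_add ha hb
  rw [integral_Ioi_of_hasDerivAt_of_nonneg' hG
    (fun t ht => by have : (0:ℝ) < t := ht; positivity) hlim, hG0, zero_sub, neg_neg]

theorem Matrix.PosDef.convexComb {n : Type*} [Fintype n] {B₁ B₂ : Matrix n n ℂ} (hB₁ : B₁.PosDef)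
    (hB₂ : B₂.PosDef) {l : ℝ} (hl0 : 0 ≤ l) (hl1 : l ≤ 1) : (l • B₁ + (1 - l) • B₂).PosDef := by
  rcases hl0.eq_or_lt with rfl | hl
  · simpa using hB₂
  · exact (hB₁.smul hl).add_posSemidef (hB₂.posSemidef.smul (sub_nonneg.2 hl1))

section VariationalForm

variable {n : Type*} [Fintype n]

noncomputable def mixedMul (τ : ℝ) (B W : Matrix n n ℂ) : Matrix n n ℂ :=
  τ • (B * W) + (1 - τ) • (W * B)

noncomputable def variationalForm (τ : ℝ) (A B W : Matrix n n ℂ) : ℝ :=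
  2 * (Aᴴ * W).trace.re - (Wᴴ * mixedMul τ B W).trace.re

theorem mixedMul_sub (τ : ℝ) (B V W : Matrix n n ℂ) :
    mixedMul τ B (V - W) = mixedMul τ B V - mixedMul τ B W := by
  simp only [mixedMul, Matrix.mul_sub, Matrix.sub_mul, smul_sub]
  abel

theorem re_trace_conjTranspose_mul_comm (X Y : Matrix n n ℂ) :
    (Xᴴ * Y).trace.re = (Yᴴ * X).trace.re := by
  rw [← Complex.conj_re, ← Complex.star_def, ← trace_conjTranspose, conjTranspose_mul,
    conjTranspose_conjTranspose]

theorem trace_conjTranspose_mul_mixedMul {B : Matrix n n ℂ} (hB : B.IsHermitian) (τ : ℝ)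
    (V W : Matrix n n ℂ) :
    (Vᴴ * mixedMul τ B W).trace = ((mixedMul τ B V)ᴴ * W).trace := by
  simp only [mixedMul, conjTranspose_add, conjTranspose_smul, conjTranspose_mul, hB.eq,
    Matrix.mul_add, Matrix.add_mul, Matrix.mul_smul, Matrix.smul_mul, trace_add, trace_smul,
    star_trivial]
  rw [← Matrix.mul_assoc Vᴴ W B, trace_mul_cycle Vᴴ W B, Matrix.mul_assoc Vᴴ B W]

theorem re_trace_conjTranspose_mul_mixedMul_self_nonneg {B : Matrix n n ℂ} (hB : B.PosSemidef)
    {τ : ℝ} (hτ0 : 0 ≤ τ) (hτ1 : τ ≤ 1) (V : Matrix n n ℂ) :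
    0 ≤ (Vᴴ * mixedMul τ B V).trace.re := by
  have hL := Complex.nonneg_iff.mp (hB.conjTranspose_mul_mul_same V).trace_nonneg
  have hR := Complex.nonneg_iff.mp (hB.mul_mul_conjTranspose_same V).trace_nonneg
  rw [trace_mul_cycle] at hR
  simp only [mixedMul, Matrix.mul_add, Matrix.mul_smul, trace_add, trace_smul, Complex.add_re,
    Complex.smul_re, ← Matrix.mul_assoc, smul_eq_mul]
  nlinarith [hL.1, hR.1]

theorem variationalForm_eq_of_mixedMul_eq {τ : ℝ} {A B W₀ : Matrix n n ℂ} (hB : B.IsHermitian)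
    (hW₀ : mixedMul τ B W₀ = A) (W : Matrix n n ℂ) :
    variationalForm τ A B W
      = (Aᴴ * W₀).trace.re - ((W - W₀)ᴴ * mixedMul τ B (W - W₀)).trace.re := by
  have hcross : ((W₀)ᴴ * mixedMul τ B W).trace.re = (Aᴴ * W).trace.re := by
    rw [trace_conjTranspose_mul_mixedMul hB, hW₀]
  simp only [variationalForm, mixedMul_sub, conjTranspose_sub, Matrix.sub_mul, Matrix.mul_sub,
    trace_sub, Complex.sub_re, hcross, hW₀, re_trace_conjTranspose_mul_comm _ A]
  ring

theorem variationalForm_convexComb (τ l : ℝ) (A₁ A₂ B₁ B₂ W : Matrix n n ℂ) :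
    variationalForm τ (l • A₁ + (1 - l) • A₂) (l • B₁ + (1 - l) • B₂) W
      = l * variationalForm τ A₁ B₁ W + (1 - l) * variationalForm τ A₂ B₂ W := by
  simp only [variationalForm, mixedMul, conjTranspose_add, conjTranspose_smul, star_trivial,
    Matrix.add_mul, Matrix.mul_add, Matrix.smul_mul, Matrix.mul_smul, trace_add, trace_smul,
    Complex.add_re, Complex.smul_re, smul_eq_mul]
  ring

end VariationalForm

section MixedInvForm

variable {n : Type*} [Fintype n]

/-- `⟪A, (τ L_B + (1 - τ) R_B)⁻¹ A⟫` for the trace inner product. -/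
noncomputable def mixedInvForm (τ : ℝ) (A B : Matrix n n ℂ) : ℝ :=
  ⨆ W, variationalForm τ A B W

variable {τ : ℝ} {A B W₀ : Matrix n n ℂ}

theorem variationalForm_le_of_mixedMul_eq (hB : B.PosSemidef) (hτ0 : 0 ≤ τ) (hτ1 : τ ≤ 1)
    (hW₀ : mixedMul τ B W₀ = A) (W : Matrix n n ℂ) :
    variationalForm τ A B W ≤ (Aᴴ * W₀).trace.re := by
  rw [variationalForm_eq_of_mixedMul_eq hB.1 hW₀]
  linarith [re_trace_conjTranspose_mul_mixedMul_self_nonneg hB hτ0 hτ1 (W - W₀)]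

theorem bddAbove_range_variationalForm_of_mixedMul_eq (hB : B.PosSemidef) (hτ0 : 0 ≤ τ)
    (hτ1 : τ ≤ 1) (hW₀ : mixedMul τ B W₀ = A) :
    BddAbove (Set.range (variationalForm τ A B)) :=
  ⟨_, Set.forall_mem_range.2 (variationalForm_le_of_mixedMul_eq hB hτ0 hτ1 hW₀)⟩

theorem mixedInvForm_eq_of_mixedMul_eq (hB : B.PosSemidef) (hτ0 : 0 ≤ τ) (hτ1 : τ ≤ 1)
    (hW₀ : mixedMul τ B W₀ = A) :
    mixedInvForm τ A B = (Aᴴ * W₀).trace.re := by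
  refine le_antisymm (ciSup_le (variationalForm_le_of_mixedMul_eq hB hτ0 hτ1 hW₀)) ?_
  refine le_ciSup_of_le (bddAbove_range_variationalForm_of_mixedMul_eq hB hτ0 hτ1 hW₀) W₀ ?_
  simp [variationalForm_eq_of_mixedMul_eq hB.1 hW₀]

end MixedInvForm

section Diagonal

variable {d : m → ℝ}

theorem mixedMul_diagonal (τ : ℝ) (W : Matrix m m ℂ) :
    mixedMul τ (diagonal fun i => (d i : ℂ)) W
      = Matrix.of fun i j => ((τ * d i + (1 - τ) * d j : ℝ) : ℂ) * W i j := by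
  ext i j
  simp only [mixedMul, Matrix.add_apply, Matrix.smul_apply, diagonal_mul, mul_diagonal, of_apply,
    Complex.real_smul]
  push_cast
  ring

theorem exists_mixedMul_diagonal_eq (hd : ∀ i, 0 < d i) {τ : ℝ} (hτ0 : 0 ≤ τ) (hτ1 : τ ≤ 1)
    (A : Matrix m m ℂ) :
    ∃ W, mixedMul τ (diagonal fun i => (d i : ℂ)) W = A ∧
      (Aᴴ * W).trace.re = ∑ i, ∑ j, Complex.normSq (A i j) * (τ * d i + (1 - τ) * d j)⁻¹ := by
  have hc : ∀ i j, ((τ * d i + (1 - τ) * d j : ℝ) : ℂ) ≠ 0 := fun i j =>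
    Complex.ofReal_ne_zero.2 (convexComb_pos (hd i) (hd j) hτ0 hτ1).ne'
  refine ⟨Matrix.of fun i j => A i j / ((τ * d i + (1 - τ) * d j : ℝ) : ℂ), ?_, ?_⟩
  · ext i j
    rw [mixedMul_diagonal, of_apply, of_apply, mul_div_cancel₀ _ (hc i j)]
  · simp only [trace, diag, mul_apply, conjTranspose_apply, of_apply, Complex.re_sum]
    rw [Finset.sum_comm]
    refine Finset.sum_congr rfl fun i _ => Finset.sum_congr rfl fun j _ => ?_
    rw [← mul_div_assoc, Complex.star_def, ← Complex.normSq_eq_conj_mul_self,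
      ← Complex.ofReal_div, Complex.ofReal_re, div_eq_mul_inv]

theorem mixedInvForm_diagonal (hd : ∀ i, 0 < d i) {τ : ℝ} (hτ0 : 0 ≤ τ) (hτ1 : τ ≤ 1)
    (A : Matrix m m ℂ) :
    mixedInvForm τ A (diagonal fun i => (d i : ℂ))
      = ∑ i, ∑ j, Complex.normSq (A i j) * (τ * d i + (1 - τ) * d j)⁻¹ := by
  obtain ⟨W, hW, htr⟩ := exists_mixedMul_diagonal_eq hd hτ0 hτ1 A
  have hD : (diagonal fun i => (d i : ℂ)).PosSemidef :=
    (PosDef.diagonal fun i => by exact_mod_cast hd i).posSemidef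
  rw [mixedInvForm_eq_of_mixedMul_eq hD hτ0 hτ1 hW, htr]

theorem inv_diagonal_of_ne_zero {K : Type*} [Field K] {v : m → K} (hv : ∀ i, v i ≠ 0) :
    (diagonal v)⁻¹ = diagonal fun i => (v i)⁻¹ :=
  inv_eq_left_inv (by simp [inv_mul_cancel₀ (hv _)])

theorem inv_smul_one_add_diagonal {t : ℝ} (ht : 0 ≤ t) (hd : ∀ i, 0 < d i) :
    (t • (1 : Matrix m m ℂ) + diagonal fun i => (d i : ℂ))⁻¹
      = diagonal fun i => (((t + d i)⁻¹ : ℝ) : ℂ) := by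
  have h : t • (1 : Matrix m m ℂ) + (diagonal fun i => (d i : ℂ))
      = diagonal fun i => ((t + d i : ℝ) : ℂ) := by
    ext i j
    rcases eq_or_ne i j with rfl | hij
    · simp
    · simp [one_apply_ne hij, diagonal_apply_ne _ hij]
  rw [h, inv_diagonal_of_ne_zero fun i => Complex.ofReal_ne_zero.2 (by linarith [hd i])]
  simp

theorem re_trace_mul_diagonal_mul_diagonal {A : Matrix m m ℂ} (hA : A.IsHermitian) (c : m → ℝ) :
    (A * diagonal (fun i => (c i : ℂ)) * A * diagonal fun i => (c i : ℂ)).trace.re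
      = ∑ i, ∑ j, Complex.normSq (A i j) * (c i * c j) := by
  simp only [trace, diag, mul_apply, diagonal_apply, mul_ite, mul_zero,
    Finset.sum_ite_eq', Finset.mem_univ, if_true, Finset.sum_mul, Complex.re_sum]
  refine Finset.sum_congr rfl fun i _ => Finset.sum_congr rfl fun j _ => ?_
  rw [← hA.apply j i, Complex.star_def, ← Complex.ofReal_re (_ * _), Complex.ofReal_mul,
    Complex.normSq_eq_conj_mul_self]
  congr 1
  push_cast
  ring

theorem Q2iota_diagonal {A : Matrix m m ℂ} (hA : A.IsHermitian) (hd : ∀ i, 0 < d i) :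
    Q2iota A (diagonal fun i => (d i : ℂ))
      = ∑ i, ∑ j, Complex.normSq (A i j) * invLogMean (d i) (d j) := by
  have hint : ∀ i j, Integrable (fun t : ℝ => Complex.normSq (A i j) * ((t + d i) * (t + d j))⁻¹)
      (volume.restrict (Ioi 0)) := fun i j =>
    (integrableOn_Ioi_inv_mul_add (hd i) (hd j)).const_mul _
  have hfun : ∀ t ∈ Ioi (0:ℝ),
      (A * (t • (1 : Matrix m m ℂ) + diagonal fun i => (d i : ℂ))⁻¹ * A *
        (t • (1 : Matrix m m ℂ) + diagonal fun i => (d i : ℂ))⁻¹).trace.re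
      = ∑ i, ∑ j, Complex.normSq (A i j) * ((t + d i) * (t + d j))⁻¹ := fun t ht => by
    simp only [inv_smul_one_add_diagonal (le_of_lt ht) hd, re_trace_mul_diagonal_mul_diagonal hA,
      mul_inv]
  rw [Q2iota, setIntegral_congr_fun measurableSet_Ioi hfun,
    integral_finsetSum _ fun i _ => integrable_finsetSum _ fun j _ => hint i j]
  refine Finset.sum_congr rfl fun i _ => ?_
  rw [integral_finsetSum _ fun j _ => hint i j]
  refine Finset.sum_congr rfl fun j _ => ?_
  rw [integral_const_mul, integral_Ioi_inv_mul_add (hd i) (hd j)]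

theorem continuousOn_mixedInvForm_diagonal (hd : ∀ i, 0 < d i) (A : Matrix m m ℂ) :
    ContinuousOn (fun τ => mixedInvForm τ A (diagonal fun i => (d i : ℂ))) (Icc 0 1) :=
  ContinuousOn.congr (continuousOn_finsetSum _ fun i _ => continuousOn_finsetSum _ fun j _ =>
    continuousOn_const.mul (continuousOn_inv_convexComb (hd i) (hd j)))
    fun _ hτ => mixedInvForm_diagonal hd hτ.1 hτ.2 A

theorem integral_mixedInvForm_diagonal {A : Matrix m m ℂ} (hA : A.IsHermitian)
    (hd : ∀ i, 0 < d i) :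
    ∫ τ in (0:ℝ)..1, mixedInvForm τ A (diagonal fun i => (d i : ℂ))
      = Q2iota A (diagonal fun i => (d i : ℂ)) := by
  have hcont : ∀ i j, ContinuousOn
      (fun τ : ℝ => Complex.normSq (A i j) * (τ * d i + (1 - τ) * d j)⁻¹) (Icc 0 1) :=
    fun i j => continuousOn_const.mul (continuousOn_inv_convexComb (hd i) (hd j))
  rw [intervalIntegral.integral_congr (g := fun τ =>
      ∑ i, ∑ j, Complex.normSq (A i j) * (τ * d i + (1 - τ) * d j)⁻¹)
      fun _ hτ => by rw [uIcc_of_le zero_le_one] at hτ; exact mixedInvForm_diagonal hd hτ.1 hτ.2 A,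
    intervalIntegral.integral_finsetSum fun i _ => (continuousOn_finsetSum _ fun j _ =>
      hcont i j).intervalIntegrable_of_Icc zero_le_one, Q2iota_diagonal hA hd]
  refine Finset.sum_congr rfl fun i _ => ?_
  rw [intervalIntegral.integral_finsetSum fun j _ =>
    (hcont i j).intervalIntegrable_of_Icc zero_le_one]
  refine Finset.sum_congr rfl fun j _ => ?_
  rw [intervalIntegral.integral_const_mul, integral_inv_convexComb (hd i) (hd j)]

end Diagonal

section Conjugation

variable (U : unitary (Matrix m m ℂ))

theorem conjStarAlgAut_inv (X : Matrix m m ℂ) :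
    (conjStarAlgAut ℂ _ U X)⁻¹ = conjStarAlgAut ℂ _ U X⁻¹ := by
  rw [conjStarAlgAut_apply, conjStarAlgAut_apply, Matrix.mul_inv_rev, Matrix.mul_inv_rev,
    inv_eq_left_inv (mul_star_self_of_mem U.2), inv_eq_left_inv (star_mul_self_of_mem U.2),
    Matrix.mul_assoc]

theorem trace_conjStarAlgAut (X : Matrix m m ℂ) : (conjStarAlgAut ℂ _ U X).trace = X.trace := by
  rw [conjStarAlgAut_apply, trace_mul_cycle, coe_star_mul_self, Matrix.one_mul]

theorem Q2iota_conjStarAlgAut (A B : Matrix m m ℂ) :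
    Q2iota (conjStarAlgAut ℂ _ U A) (conjStarAlgAut ℂ _ U B) = Q2iota A B := by
  refine setIntegral_congr_fun measurableSet_Ioi fun t _ => ?_
  have hshift : t • (1 : Matrix m m ℂ) + conjStarAlgAut ℂ _ U B
      = conjStarAlgAut ℂ _ U (t • 1 + B) := by
    rw [map_add, LinearMapClass.map_smul_of_tower, map_one]
  simp only [hshift, conjStarAlgAut_inv, ← map_mul, trace_conjStarAlgAut]

theorem mixedMul_conjStarAlgAut (τ : ℝ) (B W : Matrix m m ℂ) :
    mixedMul τ (conjStarAlgAut ℂ _ U B) (conjStarAlgAut ℂ _ U W)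
      = conjStarAlgAut ℂ _ U (mixedMul τ B W) := by
  rw [mixedMul, mixedMul, map_add, LinearMapClass.map_smul_of_tower,
    LinearMapClass.map_smul_of_tower, map_mul, map_mul]

theorem variationalForm_conjStarAlgAut (τ : ℝ) (A B W : Matrix m m ℂ) :
    variationalForm τ (conjStarAlgAut ℂ _ U A) (conjStarAlgAut ℂ _ U B) (conjStarAlgAut ℂ _ U W)
      = variationalForm τ A B W := by
  simp only [variationalForm, mixedMul_conjStarAlgAut, ← star_eq_conjTranspose, ← map_star,
    ← map_mul, trace_conjStarAlgAut]

theorem mixedInvForm_conjStarAlgAut (τ : ℝ) (A B : Matrix m m ℂ) :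
    mixedInvForm τ (conjStarAlgAut ℂ _ U A) (conjStarAlgAut ℂ _ U B) = mixedInvForm τ A B := by
  rw [mixedInvForm, ← (EquivLike.surjective (conjStarAlgAut ℂ _ U)).iSup_comp]
  simp only [variationalForm_conjStarAlgAut, mixedInvForm]

end Conjugation

theorem Matrix.PosDef.exists_eq_conjStarAlgAut_diagonal {B : Matrix m m ℂ} (hB : B.PosDef) :
    ∃ (U : unitary (Matrix m m ℂ)) (d : m → ℝ), (∀ i, 0 < d i) ∧
      B = conjStarAlgAut ℂ _ U (diagonal fun i => (d i : ℂ)) :=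
  ⟨hB.1.eigenvectorUnitary, hB.1.eigenvalues, hB.eigenvalues_pos, hB.1.spectral_theorem⟩

section PosDef

variable {τ : ℝ} {B : Matrix m m ℂ}

theorem exists_mixedMul_eq (hB : B.PosDef) (hτ0 : 0 ≤ τ) (hτ1 : τ ≤ 1) (A : Matrix m m ℂ) :
    ∃ W, mixedMul τ B W = A := by
  obtain ⟨U, d, hd, rfl⟩ := hB.exists_eq_conjStarAlgAut_diagonal
  obtain ⟨W, hW, -⟩ := exists_mixedMul_diagonal_eq hd hτ0 hτ1 ((conjStarAlgAut ℂ _ U).symm A)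
  exact ⟨conjStarAlgAut ℂ _ U W, by rw [mixedMul_conjStarAlgAut, hW, StarAlgEquiv.apply_symm_apply]⟩

theorem bddAbove_range_variationalForm (hB : B.PosDef) (hτ0 : 0 ≤ τ) (hτ1 : τ ≤ 1)
    (A : Matrix m m ℂ) : BddAbove (Set.range (variationalForm τ A B)) :=
  let ⟨_, hW⟩ := exists_mixedMul_eq hB hτ0 hτ1 A
  bddAbove_range_variationalForm_of_mixedMul_eq hB.posSemidef hτ0 hτ1 hW

theorem mixedInvForm_convexComb_le {A₁ A₂ B₁ B₂ : Matrix m m ℂ} (hB₁ : B₁.PosDef)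
    (hB₂ : B₂.PosDef) (hτ0 : 0 ≤ τ) (hτ1 : τ ≤ 1) {l : ℝ} (hl0 : 0 ≤ l) (hl1 : l ≤ 1) :
    mixedInvForm τ (l • A₁ + (1 - l) • A₂) (l • B₁ + (1 - l) • B₂)
      ≤ l * mixedInvForm τ A₁ B₁ + (1 - l) * mixedInvForm τ A₂ B₂ :=
  ciSup_le fun W => by
    rw [variationalForm_convexComb]
    exact add_le_add
      (mul_le_mul_of_nonneg_left (le_ciSup (bddAbove_range_variationalForm hB₁ hτ0 hτ1 A₁) W) hl0)
      (mul_le_mul_of_nonneg_left (le_ciSup (bddAbove_range_variationalForm hB₂ hτ0 hτ1 A₂) W)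
        (sub_nonneg.2 hl1))

theorem intervalIntegrable_mixedInvForm (hB : B.PosDef) (A : Matrix m m ℂ) :
    IntervalIntegrable (fun τ => mixedInvForm τ A B) volume 0 1 := by
  obtain ⟨U, d, hd, rfl⟩ := hB.exists_eq_conjStarAlgAut_diagonal
  rw [← StarAlgEquiv.apply_symm_apply (conjStarAlgAut ℂ _ U) A]
  simp only [mixedInvForm_conjStarAlgAut]
  exact (continuousOn_mixedInvForm_diagonal hd _).intervalIntegrable_of_Icc zero_le_one

theorem integral_mixedInvForm {A : Matrix m m ℂ} (hA : A.IsHermitian) (hB : B.PosDef) :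
    ∫ τ in (0:ℝ)..1, mixedInvForm τ A B = Q2iota A B := by
  obtain ⟨U, d, hd, rfl⟩ := hB.exists_eq_conjStarAlgAut_diagonal
  rw [← StarAlgEquiv.apply_symm_apply (conjStarAlgAut ℂ _ U) A]
  simp only [mixedInvForm_conjStarAlgAut, Q2iota_conjStarAlgAut]
  exact integral_mixedInvForm_diagonal (hA.isSelfAdjoint.map _) hd

end PosDef

/-- Joint convexity of `Q₂^ι`. -/
theorem Q2iota_jointly_convex (A₁ A₂ B₁ B₂ : Matrix m m ℂ)
    (hA₁ : A₁.PosSemidef) (hA₂ : A₂.PosSemidef) (hB₁ : B₁.PosDef) (hB₂ : B₂.PosDef)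
    (l : ℝ) (hl0 : 0 ≤ l) (hl1 : l ≤ 1) :
    Q2iota (l • A₁ + (1 - l) • A₂) (l • B₁ + (1 - l) • B₂)
      ≤ l * Q2iota A₁ B₁ + (1 - l) * Q2iota A₂ B₂ := by
  have hA : (l • A₁ + (1 - l) • A₂).IsHermitian :=
    ((hA₁.smul hl0).add (hA₂.smul (sub_nonneg.2 hl1))).1
  have hI₁ := (intervalIntegrable_mixedInvForm hB₁ A₁).const_mul l
  have hI₂ := (intervalIntegrable_mixedInvForm hB₂ A₂).const_mul (1 - l)
  rw [← integral_mixedInvForm hA (hB₁.convexComb hB₂ hl0 hl1), ← integral_mixedInvForm hA₁.1 hB₁,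
    ← integral_mixedInvForm hA₂.1 hB₂, ← intervalIntegral.integral_const_mul,
    ← intervalIntegral.integral_const_mul, ← intervalIntegral.integral_add hI₁ hI₂]
  exact intervalIntegral.integral_mono_on zero_le_one
    (intervalIntegrable_mixedInvForm (hB₁.convexComb hB₂ hl0 hl1) _) (hI₁.add hI₂)
    fun τ hτ => mixedInvForm_convexComb_le hB₁ hB₂ hτ.1 hτ.2 hl0 hl1
end

section
/- Let ρ_x, x ∈ X (finite), be mutually commuting density matrices, P a probability distribution on X, α ∈ [1/2, 1), r = (1−α)/α, and M ≥ 2. With the decoder Π_m = ρ_{x_m}^α (∑_{m'} ρ_{x_{m'}}^α)⁻¹ and codewords x₁,...,x_M drawn i.i.d. from P, the expected average decoding error satisfies 𝔼[p_err] ≤ (M−1)^r · tr[(𝔼_x ρ_x^α)^{1+r}], where p_err = (1/M) ∑_m tr[ρ_{x_m}(1 − Π_m)]. -/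
open MeasureTheory Matrix Set ComplexOrder

variable {m : Type*} [Fintype m] [DecidableEq m]

/-! Simultaneously diagonalize the commuting states, `ρ_x = U diag(d_x) U*`. Then every matrix
in the statement is `U diag(·) U*` of a function of the joint eigenvalues, and the bound splits
into one scalar inequality per joint eigenvector `i`, for the classical channel `x ↦ d_x(i)`.
For a fixed message `k`, write `a = d_{c_k}(i)^α` and `b = ∑_{j ≠ k} d_{c_j}(i)^α`; then
`b / (a + b) ≤ (b / a)^r` since `0 < r ≤ 1`, which bounds the error term by `a · b^r`.
Averaging over the independent codewords, Hölder's inequality with weights `∏ P(c_j) · a`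
moves the expectation inside `b^r`, and `𝔼[a · b] = (M - 1) (𝔼 a)²` gives the right-hand side. -/

open Finset Real Module.End

theorem LinearMap.IsSymmetric.exists_orthonormalBasis_forall_apply_eq_smul
    {𝕜 E X : Type*} [RCLike 𝕜] [NormedAddCommGroup E] [InnerProductSpace 𝕜 E]
    [FiniteDimensional 𝕜 E] {T : X → Module.End 𝕜 E} (hT : ∀ x, (T x).IsSymmetric)
    (hcomm : Pairwise (Function.onFun Commute T)) :
    ∃ (b : OrthonormalBasis (Fin (Module.finrank 𝕜 E)) 𝕜 E)
      (μ : Fin (Module.finrank 𝕜 E) → X → ℝ), ∀ j x, T x (b j) = (μ j x : 𝕜) • b j := by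
  classical
  let V : (X → 𝕜) → Submodule 𝕜 E := fun χ => ⨅ x, eigenspace (T x) (χ x)
  have hV : DirectSum.IsInternal V := directSum_isInternal_of_pairwise_commute hT hcomm
  have : Fintype {χ // V χ ≠ ⊥} := hV.submodule_iSupIndep.fintypeNeBotOfFiniteDimensional
  have hV' : DirectSum.IsInternal fun χ : {χ // V χ ≠ ⊥} => V χ :=
    DirectSum.isInternal_ne_bot_iff.mpr hV
  have hOrth := (orthogonalFamily_iInf_eigenspaces hT).comp
    (Subtype.val_injective (p := fun χ => V χ ≠ ⊥))
  let b := hV'.subordinateOrthonormalBasis rfl hOrth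
  have hb (j x) : T x (b j) = (hV'.subordinateOrthonormalBasisIndex rfl j hOrth).1 x • b j :=
    mem_eigenspace_iff.mp <| (Submodule.mem_iInf _).mp
      (hV'.subordinateOrthonormalBasis_subordinate rfl j hOrth) x
  have hreal (j x) : ∃ μ : ℝ, T x (b j) = (μ : 𝕜) • b j := by
    have hev := hasEigenvalue_of_hasEigenvector
      ⟨mem_eigenspace_iff.mpr (hb j x), b.toBasis.ne_zero j⟩
    exact ⟨_, RCLike.conj_eq_iff_re.mp ((hT x).conj_eigenvalue_eq_self hev) ▸ hb j x⟩
  choose μ hμ using hreal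
  exact ⟨b, μ, hμ⟩

noncomputable def unitaryDiag (U : unitaryGroup m ℂ) : (m → ℝ) →ₐ[ℝ] Matrix m m ℂ :=
  ((Unitary.conjStarAlgAut ℂ (Matrix m m ℂ) U).toAlgEquiv.toAlgHom.restrictScalars ℝ).comp
    (((diagonalAlgHom ℂ).restrictScalars ℝ).comp (Complex.ofRealAm.compLeft m))

section UnitaryDiag

variable (U : unitaryGroup m ℂ)

lemma unitaryDiag_apply (g : m → ℝ) :
    unitaryDiag U g = U * diagonal (fun i => (g i : ℂ)) * star (U : Matrix m m ℂ) := rfl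

lemma unitaryDiag_mulVec_col (g : m → ℝ) (j : m) :
    unitaryDiag U g *ᵥ (U *ᵥ Pi.single j 1) = (g j : ℂ) • (U *ᵥ Pi.single j 1) := by
  rw [unitaryDiag_apply, mulVec_mulVec, mul_assoc, mul_assoc, Unitary.coe_star_mul_self, mul_one,
    ← mulVec_mulVec, diagonal_mulVec_single, ← mulVec_smul, ← Pi.single_smul, smul_eq_mul,
    mul_one]

lemma re_trace_unitaryDiag (g : m → ℝ) : (unitaryDiag U g).trace.re = ∑ i, g i := by
  rw [unitaryDiag_apply, trace_mul_cycle, Unitary.coe_star_mul_self, one_mul, trace_diagonal,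
    Complex.re_sum]
  simp

lemma isHermitian_unitaryDiag (g : m → ℝ) : (unitaryDiag U g).IsHermitian := by
  simp [IsHermitian, unitaryDiag_apply, star_eq_conjTranspose, Matrix.mul_assoc, Pi.star_def]

lemma inv_unitaryDiag {g : m → ℝ} (hg : ∀ i, g i ≠ 0) :
    (unitaryDiag U g)⁻¹ = unitaryDiag U g⁻¹ := by
  refine inv_eq_right_inv ?_
  rw [← map_mul, ← map_one (unitaryDiag U)]
  congr 1
  ext i
  simp [hg i]

lemma pos_of_posDef_unitaryDiag {g : m → ℝ} (h : (unitaryDiag U g).PosDef) (i : m) : 0 < g i := by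
  have hinj : Function.Injective (U : Matrix m m ℂ).mulVec := fun v w hvw => by
    simpa [mulVec_mulVec] using congrArg (star (U : Matrix m m ℂ) *ᵥ ·) hvw
  have := h.conjTranspose_mul_mul_same hinj
  rw [unitaryDiag_apply, ← star_eq_conjTranspose, Matrix.mul_assoc, Matrix.mul_assoc,
    Unitary.coe_star_mul_self, mul_one, ← Matrix.mul_assoc, Unitary.coe_star_mul_self, one_mul,
    posDef_diagonal_iff] at this
  exact_mod_cast this i

variable {U}

lemma eq_unitaryDiag_of_mulVec_col {A : Matrix m m ℂ} {g : m → ℝ}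
    (h : ∀ j, A *ᵥ (U *ᵥ Pi.single j 1) = (g j : ℂ) • (U *ᵥ Pi.single j 1)) :
    A = unitaryDiag U g := by
  refine (Unitary.isUnit_coe (U := U)).mul_left_injective (ext_of_mulVec_single fun j => ?_)
  simp only [← mulVec_mulVec, h, unitaryDiag_mulVec_col]

end UnitaryDiag

theorem exists_unitaryDiag_of_commute {X : Type*} {ρ : X → Matrix m m ℂ}
    (hρ : ∀ x, (ρ x).IsHermitian) (hcomm : ∀ x y, ρ x * ρ y = ρ y * ρ x) :
    ∃ (U : unitaryGroup m ℂ) (d : X → m → ℝ), ∀ x, ρ x = unitaryDiag U (d x) := by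
  obtain ⟨b₀, μ, hμ⟩ := LinearMap.IsSymmetric.exists_orthonormalBasis_forall_apply_eq_smul
    (T := fun x => toLpLinAlgEquiv 2 (ρ x)) (fun x => isSymmetric_toEuclideanLin_iff.mpr (hρ x))
    (fun x y _ => (show Commute (ρ x) (ρ y) from hcomm x y).map (toLpLinAlgEquiv 2))
  let e : Fin (Module.finrank ℂ (EuclideanSpace ℂ m)) ≃ m := Fintype.equivOfCardEq (by simp)
  let b := b₀.reindex e
  let U : unitaryGroup m ℂ :=
    ⟨_, (EuclideanSpace.basisFun m ℂ).toMatrix_orthonormalBasis_mem_unitary b⟩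
  have hU (j) : (U : Matrix m m ℂ) *ᵥ Pi.single j 1 = b j := by
    ext i
    simp [U, mulVec_single, Module.Basis.toMatrix_apply]
  refine ⟨U, fun x i => μ (e.symm i) x, fun x => eq_unitaryDiag_of_mulVec_col fun j => ?_⟩
  rw [hU, show b j = b₀ (e.symm j) by simp [b]]
  exact congr(WithLp.ofLp $(hμ (e.symm j) x))

lemma mrpow_mulVec_of_mulVec_eq_smul {A : Matrix m m ℂ} (hA : A.IsHermitian) {v : m → ℂ}
    {μ : ℝ} (hv : A *ᵥ v = (μ : ℂ) • v) (r : ℝ) :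
    mrpow A r *ᵥ v = ((μ ^ r : ℝ) : ℂ) • v := by
  rw [mrpow, dif_pos hA]
  set V : Matrix m m ℂ := (hA.eigenvectorUnitary : Matrix m m ℂ)
  set w := star V *ᵥ v
  have hv' : v = V *ᵥ w := by simp [w, V, mulVec_mulVec]
  have hAV : star V * A = diagonal (fun i => (hA.eigenvalues i : ℂ)) * star V := by
    conv_lhs => rw [hA.spectral_theorem]
    simp [V, ← Matrix.mul_assoc, Function.comp_def]
  have hw : diagonal (fun i => (hA.eigenvalues i : ℂ)) *ᵥ w = (μ : ℂ) • w := by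
    rw [mulVec_mulVec, ← hAV, ← mulVec_mulVec, hv, mulVec_smul]
  have hw' : diagonal (fun i => ((hA.eigenvalues i ^ r : ℝ) : ℂ)) *ᵥ w
      = ((μ ^ r : ℝ) : ℂ) • w := by
    ext i
    have hi := congrFun hw i
    simp only [mulVec_diagonal, Pi.smul_apply, smul_eq_mul] at hi ⊢
    rcases eq_or_ne (w i) 0 with h | h
    · simp [h]
    · have := mul_right_cancel₀ h hi
      norm_cast at this
      rw [this]
  rw [← mulVec_mulVec, ← mulVec_mulVec, hw', mulVec_smul, ← hv']

lemma mrpow_unitaryDiag (U : unitaryGroup m ℂ) (g : m → ℝ) (r : ℝ) :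
    mrpow (unitaryDiag U g) r = unitaryDiag U (fun i => g i ^ r) :=
  eq_unitaryDiag_of_mulVec_col fun j =>
    mrpow_mulVec_of_mulVec_eq_smul (isHermitian_unitaryDiag U g) (unitaryDiag_mulVec_col U g j) r

lemma re_trace_unitaryDiag_mul_one_sub {X ι : Type*} [Fintype ι] (U : unitaryGroup m ℂ)
    {g : X → m → ℝ} (hg : ∀ x i, 0 < g x i) (α : ℝ) (c : ι → X) (k : ι) :
    (unitaryDiag U (g (c k)) * (1 - mrpow (unitaryDiag U (g (c k))) α *
        (∑ k', mrpow (unitaryDiag U (g (c k'))) α)⁻¹)).trace.re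
      = ∑ i, g (c k) i * (1 - g (c k) i ^ α * (∑ k', g (c k') i ^ α)⁻¹) := by
  have hsum : ∀ i, (∑ k', fun i => g (c k') i ^ α) i ≠ 0 := fun i => by
    rw [Finset.sum_apply]
    exact (sum_pos (fun k' _ => rpow_pos_of_pos (hg _ i) α) ⟨k, mem_univ k⟩).ne'
  simp only [mrpow_unitaryDiag, ← map_sum, inv_unitaryDiag U hsum, ← map_one (unitaryDiag U),
    ← map_sub, ← map_mul, re_trace_unitaryDiag]
  simp [Finset.sum_apply]

lemma re_trace_mrpow_sum_smul_mrpow_unitaryDiag {X : Type*} [Fintype X] (U : unitaryGroup m ℂ)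
    (P : X → ℝ) (g : X → m → ℝ) (α s : ℝ) :
    (mrpow (∑ x, P x • mrpow (unitaryDiag U (g x)) α) s).trace.re
      = ∑ i, (∑ x, P x * g x i ^ α) ^ s := by
  simp only [mrpow_unitaryDiag, ← map_smul, ← map_sum, re_trace_unitaryDiag]
  simp [Finset.sum_apply]

lemma div_add_le_div_rpow {a b s : ℝ} (ha : 0 < a) (hb : 0 ≤ b) (hs0 : 0 ≤ s) (hs1 : s ≤ 1) :
    b / (a + b) ≤ (b / a) ^ s := by
  rcases le_or_gt (b / a) 1 with h | h
  · calc b / (a + b) ≤ b / a := by gcongr; linarith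
      _ ≤ (b / a) ^ s := self_le_rpow_of_le_one (by positivity) h hs1
  · calc b / (a + b) ≤ 1 := div_le_one_of_le₀ (by linarith) (by linarith)
      _ ≤ (b / a) ^ s := one_le_rpow h.le hs0

lemma mul_one_sub_rpow_mul_inv_le {p b α : ℝ} (hp : 0 < p) (hb : 0 ≤ b)
    (hα : α ∈ Set.Ico (1/2 : ℝ) 1) :
    p * (1 - p ^ α * (p ^ α + b)⁻¹) ≤ p ^ α * b ^ ((1 - α) / α) := by
  have hα0 : 0 < α := by linarith [hα.1]
  have ha : 0 < p ^ α := rpow_pos_of_pos hp α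
  have hpα : p * (p ^ α)⁻¹ ^ ((1 - α) / α) = p ^ α := by
    rw [inv_rpow ha.le, ← rpow_mul hp.le, mul_div_cancel₀ _ hα0.ne', ← rpow_neg hp.le,
      ← rpow_one_add' hp.le (by linarith : (0:ℝ) < 1 + -(1 - α)).ne']
    congr 1
    ring
  calc p * (1 - p ^ α * (p ^ α + b)⁻¹) = p * (b / (p ^ α + b)) := by
        field_simp
        ring
    _ ≤ p * (b / p ^ α) ^ ((1 - α) / α) := by
        gcongr
        exact div_add_le_div_rpow ha hb (div_nonneg (by linarith [hα.2]) hα0.le)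
          ((div_le_one hα0).mpr (by linarith [hα.1]))
    _ = p ^ α * b ^ ((1 - α) / α) := by
        rw [div_eq_mul_inv, mul_rpow hb (inv_nonneg.mpr ha.le), mul_left_comm, hpα, mul_comm]

lemma sum_mul_rpow_le {κ : Type*} (s : Finset κ) {r : ℝ} (hr0 : 0 < r) (hr1 : r ≤ 1)
    {w z : κ → ℝ} (hw : ∀ i, 0 ≤ w i) (hz : ∀ i, 0 ≤ z i) :
    ∑ i ∈ s, w i * z i ^ r ≤ (∑ i ∈ s, w i) ^ (1 - r) * (∑ i ∈ s, w i * z i) ^ r := by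
  have := inner_le_weight_mul_Lp_of_nonneg s (one_le_inv₀ hr0 |>.mpr hr1) w (fun i => z i ^ r) hw
    fun i => rpow_nonneg (hz i) r
  simpa [inv_inv, ← rpow_mul (hz _), hr0.ne'] using this

section ProductWeights

variable {X ι : Type*} [Fintype X] [Fintype ι] [DecidableEq ι] {P : X → ℝ}

lemma sum_prod_mul_prod (P : X → ℝ) (F : ι → X → ℝ) :
    ∑ c : ι → X, (∏ i, P (c i)) * ∏ i, F i (c i) = ∏ i, ∑ x, P x * F i x := by
  rw [Fintype.prod_sum]
  simp only [prod_mul_distrib]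

lemma sum_prod_mul_apply (hP1 : ∑ x, P x = 1) (f : X → ℝ) (k : ι) :
    ∑ c : ι → X, (∏ i, P (c i)) * f (c k) = ∑ x, P x * f x := by
  simpa [ite_apply, apply_ite, hP1] using sum_prod_mul_prod P (fun i => if i = k then f else 1)

lemma sum_prod_mul_apply_mul_apply (hP1 : ∑ x, P x = 1) (f g : X → ℝ) {j k : ι} (hjk : j ≠ k) :
    ∑ c : ι → X, (∏ i, P (c i)) * (f (c k) * g (c j)) = (∑ x, P x * f x) * ∑ x, P x * g x := by
  have := sum_prod_mul_prod P (fun i x => (if i = k then f x else 1) * (if i = j then g x else 1))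
  simp only [prod_mul_distrib, prod_ite_eq', Finset.mem_univ, ite_true] at this
  rw [this]
  calc _ = ∏ i, ((if i = k then ∑ x, P x * f x else 1) * if i = j then ∑ x, P x * g x else 1) :=
        prod_congr rfl fun i _ => by
          by_cases hk : i = k <;> by_cases hj : i = j <;> simp_all
    _ = _ := by
        simp only [prod_mul_distrib, prod_ite_eq', Finset.mem_univ, ite_true]

theorem sum_prod_mul_error_le (hP : ∀ x, 0 ≤ P x) (hP1 : ∑ x, P x = 1)
    {p : X → ℝ} (hp : ∀ x, 0 < p x) {α : ℝ} (hα : α ∈ Set.Ico (1/2 : ℝ) 1) (k : ι) :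
    ∑ c : ι → X, (∏ i, P (c i)) * (p (c k) * (1 - p (c k) ^ α * (∑ j, p (c j) ^ α)⁻¹))
      ≤ ((Fintype.card ι : ℝ) - 1) ^ ((1 - α) / α) *
          (∑ x, P x * p x ^ α) ^ (1 + (1 - α) / α) := by
  set r := (1 - α) / α
  have hr0 : 0 < r := div_pos (by linarith [hα.2]) (by linarith [hα.1])
  have hr1 : r ≤ 1 := (div_le_one (by linarith [hα.1])).mpr (by linarith [hα.1])
  set q := ∑ x, P x * p x ^ α
  have hq : 0 ≤ q := sum_nonneg fun x _ => mul_nonneg (hP x) (rpow_nonneg (hp x).le α)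
  have hcard : 1 ≤ Fintype.card ι := Fintype.card_pos_iff.mpr ⟨k⟩
  have hn : (0 : ℝ) ≤ Fintype.card ι - 1 := by
    rw [sub_nonneg]
    exact_mod_cast hcard
  set w : (ι → X) → ℝ := fun c => (∏ i, P (c i)) * p (c k) ^ α
  set S : (ι → X) → ℝ := fun c => ∑ j ∈ univ.erase k, p (c j) ^ α
  have hw : ∀ c, 0 ≤ w c := fun c =>
    mul_nonneg (prod_nonneg fun i _ => hP (c i)) (rpow_nonneg (hp _).le α)
  have hS : ∀ c, 0 ≤ S c := fun c => sum_nonneg fun j _ => rpow_nonneg (hp _).le α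
  have hw_sum : ∑ c, w c = q := sum_prod_mul_apply hP1 (fun x => p x ^ α) k
  have hwS_sum : ∑ c, w c * S c = (Fintype.card ι - 1) * (q * q) := by
    simp only [w, S, mul_sum, mul_assoc]
    rw [sum_comm, sum_congr rfl fun j hj =>
      sum_prod_mul_apply_mul_apply hP1 (fun x => p x ^ α) (fun x => p x ^ α) (ne_of_mem_erase hj),
      sum_const, card_erase_of_mem (Finset.mem_univ k), card_univ, nsmul_eq_mul,
      Nat.cast_sub hcard, Nat.cast_one]
  calc _ ≤ ∑ c, w c * S c ^ r := sum_le_sum fun c _ => by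
        rw [mul_assoc, ← add_sum_erase _ _ (Finset.mem_univ k)]
        exact mul_le_mul_of_nonneg_left (mul_one_sub_rpow_mul_inv_le (hp _) (hS c) hα)
          (prod_nonneg fun i _ => hP (c i))
    _ ≤ (∑ c, w c) ^ (1 - r) * (∑ c, w c * S c) ^ r := sum_mul_rpow_le _ hr0 hr1 hw hS
    _ = _ := by
        have hqq : q ^ (1 - r) * q ^ r = q := by
          rw [← rpow_add' hq (by norm_num), sub_add_cancel, rpow_one]
        rw [hw_sum, hwS_sum, mul_rpow hn (mul_nonneg hq hq), mul_rpow hq hq,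
          rpow_one_add' hq (by linarith)]
        linear_combination ((Fintype.card ι : ℝ) - 1) ^ r * q ^ r * hqq

theorem sum_prod_mul_average_error_le [Nonempty ι] {m : Type*} [Fintype m]
    (hP : ∀ x, 0 ≤ P x) (hP1 : ∑ x, P x = 1) {d : X → m → ℝ} (hd : ∀ x i, 0 < d x i) {α : ℝ}
    (hα : α ∈ Set.Ico (1/2 : ℝ) 1) :
    ∑ c : ι → X, (∏ k, P (c k)) * ((1 / (Fintype.card ι : ℝ)) *
        ∑ k, ∑ i, d (c k) i * (1 - d (c k) i ^ α * (∑ k', d (c k') i ^ α)⁻¹))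
      ≤ ((Fintype.card ι : ℝ) - 1) ^ ((1 - α) / α) *
          ∑ i, (∑ x, P x * d x i ^ α) ^ (1 + (1 - α) / α) := by
  have hn : (Fintype.card ι : ℝ) ≠ 0 := Nat.cast_ne_zero.mpr Fintype.card_ne_zero
  calc _ = (1 / (Fintype.card ι : ℝ)) * ∑ k : ι, ∑ i, ∑ c : ι → X,
        (∏ k, P (c k)) * (d (c k) i * (1 - d (c k) i ^ α * (∑ k', d (c k') i ^ α)⁻¹)) := by
        simp only [mul_left_comm _ (1 / (Fintype.card ι : ℝ)), ← mul_sum]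
        congr 1
        simp only [mul_sum]
        rw [sum_comm]
        exact sum_congr rfl fun k _ => sum_comm
    _ ≤ (1 / (Fintype.card ι : ℝ)) * ∑ k : ι, ∑ i,
        ((Fintype.card ι : ℝ) - 1) ^ ((1 - α) / α) *
          (∑ x, P x * d x i ^ α) ^ (1 + (1 - α) / α) := by
        gcongr with k _ i _
        exact sum_prod_mul_error_le hP hP1 (fun x => hd x i) hα k
    _ = _ := by
        rw [sum_const, card_univ, nsmul_eq_mul, ← mul_assoc, one_div_mul_cancel hn, one_mul,
          mul_sum]

end ProductWeights

theorem classical_random_coding_general {X : Type*} [Fintype X]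
    (ρ : X → Matrix m m ℂ) (hρ : ∀ x, (ρ x).PosDef)
    (hcomm : ∀ x y, ρ x * ρ y = ρ y * ρ x)
    (P : X → ℝ) (hP : ∀ x, 0 ≤ P x) (hP1 : ∑ x, P x = 1)
    (α : ℝ) (hα : α ∈ Set.Ico (1/2 : ℝ) 1) (M : ℕ) (hM : 2 ≤ M) :
    ∑ c : Fin M → X, (∏ k, P (c k)) *
        ((1 / (M : ℝ)) * ∑ k, ((ρ (c k)) *
          ((1 : Matrix m m ℂ) -
            mrpow (ρ (c k)) α * (∑ k', mrpow (ρ (c k')) α)⁻¹)).trace.re)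
      ≤ ((M : ℝ) - 1) ^ ((1 - α) / α) *
          (mrpow (∑ x, P x • mrpow (ρ x) α) (1 + (1 - α) / α)).trace.re := by
  obtain ⟨U, d, hd⟩ := exists_unitaryDiag_of_commute (fun x => (hρ x).isHermitian) hcomm
  have hpos (x i) : 0 < d x i := pos_of_posDef_unitaryDiag U (hd x ▸ hρ x) i
  have : Nonempty (Fin M) := ⟨⟨0, by omega⟩⟩
  simp only [hd, re_trace_unitaryDiag_mul_one_sub U hpos, re_trace_mrpow_sum_smul_mrpow_unitaryDiag]
  simpa using sum_prod_mul_average_error_le (ι := Fin M) hP hP1 hpos hα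

/-- Classical random-coding bound: for mutually commuting channel states and the decoder
`Π_m = ρ_{x_m}^α (∑_{m'} ρ_{x_{m'}}^α)⁻¹`, the expected average decoding error over i.i.d.
codewords satisfies `𝔼[p_err] ≤ (M-1)^r tr[(𝔼_x ρ_x^α)^{1+r}]` with `r = (1-α)/α`. -/
theorem classical_random_coding {X : Type*} [Fintype X]
    (ρ : X → Matrix m m ℂ) (hρ : ∀ x, (ρ x).PosDef) (hρt : ∀ x, (ρ x).trace = 1)
    (hcomm : ∀ x y, ρ x * ρ y = ρ y * ρ x)
    (P : X → ℝ) (hP : ∀ x, 0 ≤ P x) (hP1 : ∑ x, P x = 1)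
    (α : ℝ) (hα : α ∈ Set.Ico (1/2 : ℝ) 1) (M : ℕ) (hM : 2 ≤ M) :
    ∑ c : Fin M → X, (∏ k, P (c k)) *
        ((1 / (M : ℝ)) * ∑ k, ((ρ (c k)) *
          ((1 : Matrix m m ℂ) -
            mrpow (ρ (c k)) α * (∑ k', mrpow (ρ (c k')) α)⁻¹)).trace.re)
      ≤ ((M : ℝ) - 1) ^ ((1 - α) / α) *
          (mrpow (∑ x, P x • mrpow (ρ x) α) (1 + (1 - α) / α)).trace.re :=
  classical_random_coding_general ρ hρ hcomm P hP hP1 α hα M hM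
end
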